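/- For every i ≥ 0, the simple values 2_i and 3_i are incomparable under the prudent relation from player 1's perspective: neither 2_i <^P_1 3_i nor 3_i <^P_1 2_i holds. -/
import Mathlib


/-- Values of three-player (more generally `N`-player) games: a leaf is an
unconditional win for the corresponding player, an internal node is the list of
values the player to move may choose from. -/
inductive GV : Type
  | leaf : ℕ → GV
  | node : List GV → GV
  deriving Repr

namespace GV

mutual
/-- Boolean equality on game values. -/
def beq : GV → GV → Bool
  | leaf a, leaf b => a == b
  | node l, node m => beqList l m
  | _, _ => false
def beqList : List GV → List GV → Bool
  | [], [] => true
  | x :: xs, y :: ys => beq x y && beqList xs ys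
  | _, _ => false
end

instance : BEq GV := ⟨beq⟩

/-- `x` is a guaranteed win for player `p`: every leaf of the tree is `p`. -/
inductive IsWin (p : ℕ) : GV → Prop
  | leaf : IsWin p (leaf p)
  | node {l : List GV} : (∀ x ∈ l, IsWin p x) → IsWin p (node l)

/-- `x` is a guaranteed loss for player `p`: no leaf of the tree is `p`. -/
inductive IsLoss (p : ℕ) : GV → Prop
  | leaf {a : ℕ} : a ≠ p → IsLoss p (leaf a)
  | node {l : List GV} : (∀ x ∈ l, IsLoss p x) → IsLoss p (node l)

/-- The selfish relation `X ≤ₚ Y` ("X is weaker than or equal to Y from the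
perspective of player p"): `X = Y`, or a value that is neither a guaranteed win
nor loss is below the guaranteed win `p`, or a guaranteed loss is below any
non-decided value, or the relation is inferred recursively from children. -/
inductive le (p : ℕ) : GV → GV → Prop
  | refl (x) : le p x x
  | winTop {x} : ¬ IsWin p x → ¬ IsLoss p x → le p x (leaf p)
  | lossBot {x y} : IsLoss p x → ¬ IsLoss p y → le p x y
  | left {xs : List GV} {y} : (∀ x ∈ xs, le p x y) → le p (node xs) y
  | pair {xs ys : List GV} : (∀ x ∈ xs, ∀ y ∈ ys, le p x y) → le p (node xs) (node ys)

/-- Equality of values from player `p`'s perspective: mutual weakness. -/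
def eqv (p : ℕ) (x y : GV) : Prop := le p x y ∧ le p y x

/-- `X <ₚ Y`: strictly weaker from player `p`'s perspective. -/
def lt (p : ℕ) (x y : GV) : Prop := le p x y ∧ ¬ eqv p x y

/-- Fuel-indexed version of the prudent relation `<ᴾₚ`. -/
def pLtF (p : ℕ) : ℕ → GV → GV → Prop
  | 0, x, y => lt p x y
  | n+1, node xs, node ys =>
      lt p (node xs) (node ys) ∨
      ((∀ a ∈ xs, ∀ b ∈ ys, pLtF p n a b ∨ (¬ pLtF p n a b ∧ ¬ pLtF p n b a)) ∧
        ∃ a ∈ xs, ∃ b ∈ ys, pLtF p n a b)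
  | _+1, x, y => lt p x y

/-- The prudent relation `X <ᴾₚ Y`: `X <ₚ Y`, or every pair of children is
prudently weaker or prudently incomparable, with at least one strictly
prudently weaker pair.  (The fuel `sizeOf x + sizeOf y` is large enough for
the recursion to have stabilised.) -/
def pLt (p : ℕ) (x y : GV) : Prop := pLtF p (sizeOf x + sizeOf y) x y

/-- Prudent incomparability `X ≄ᴾₚ Y`. -/
def pIncomp (p : ℕ) (x y : GV) : Prop := ¬ pLt p x y ∧ ¬ pLt p y x

/-- The simple value `a_i`:  `a_0 = a` and `a_{i+1} = [b_i, c_i]` with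
`{b,c} = {1,2,3} \ {a}`. -/
def simple : ℕ → ℕ → GV
  | a, 0 => leaf a
  | a, i+1 =>
    if a = 1 then node [simple 2 i, simple 3 i]
    else if a = 2 then node [simple 1 i, simple 3 i]
    else node [simple 1 i, simple 2 i]

/-- The player moving after player `p` in a three-player game. -/
def nextP (p : ℕ) : ℕ := p % 3 + 1

/-- The two players other than `p` in a three-player game. -/
def others (p : ℕ) : ℕ × ℕ :=
  if p = 1 then (2, 3) else if p = 2 then (1, 3) else (1, 2)

/-- Prudent reduction of a list of options by player `p`: options strictly
prudently weaker than another option are discarded, duplicates are merged,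
the incomparable pair `{b_i, c_i}` is exactly `p_{i+1}` and `p_{i+1}` absorbs
`b_i` and `c_i`, and a single remaining simple option is the value itself. -/
inductive pReduce (p : ℕ) : GV → GV → Prop
  | refl (x) : pReduce p x x
  | perm {l l' : List GV} {v} : l.Perm l' → pReduce p (node l') v → pReduce p (node l) v
  | dedup {x : GV} {t : List GV} {v} :
      pReduce p (node (x :: t)) v → pReduce p (node (x :: x :: t)) v
  | drop {x y : GV} {t : List GV} {v} : y ∈ t → pLt p x y →
      pReduce p (node t) v → pReduce p (node (x :: t)) v
  | singleton (a i : ℕ) : pReduce p (node [simple a i]) (simple a i)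
  | merge {i : ℕ} {t : List GV} {v} :
      pReduce p (node (simple p (i+1) :: t)) v →
      pReduce p (node (simple (others p).1 i :: simple (others p).2 i :: t)) v
  | absorb {i b : ℕ} {t : List GV} {v} :
      (b = (others p).1 ∨ b = (others p).2) →
      pReduce p (node (simple p (i+1) :: t)) v →
      pReduce p (node (simple p (i+1) :: simple b i :: t)) v

/-- Selfish reduction of a list of options by player `p`: options strictly
weaker (in the selfish sense `<ₚ`) than another option are discarded,
duplicates are merged, and a single remaining option is the value itself. -/
inductive sReduce (p : ℕ) : GV → GV → Prop
  | refl (x) : sReduce p x x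
  | perm {l l' : List GV} {v} : l.Perm l' → sReduce p (node l') v → sReduce p (node l) v
  | dedup {x : GV} {t : List GV} {v} :
      sReduce p (node (x :: t)) v → sReduce p (node (x :: x :: t)) v
  | drop {x y : GV} {t : List GV} {v} : y ∈ t → lt p x y →
      sReduce p (node t) v → sReduce p (node (x :: t)) v
  | singleton (a i : ℕ) : sReduce p (node [simple a i]) (simple a i)

/-- Bottom-up prudent evaluation of a game tree, `p` being the player to move
at the root: children are reduced from the next player's perspective, then
the list of options is prudently reduced by `p`. -/
inductive gameReduce : ℕ → GV → GV → Prop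
  | leaf (p a) : gameReduce p (leaf a) (leaf a)
  | node {p : ℕ} {l l' : List GV} {v} :
      l.length = l'.length →
      (∀ q ∈ l.zip l', gameReduce (nextP p) q.1 q.2) →
      pReduce p (node l') v → gameReduce p (node l) v

/-- A well-formed three-player game value: leaves in `{1,2,3}`, nonempty nodes. -/
inductive Valid : GV → Prop
  | leaf {a} : (a = 1 ∨ a = 2 ∨ a = 3) → Valid (leaf a)
  | node {l} : l ≠ [] → (∀ x ∈ l, Valid x) → Valid (node l)

/-- The game tree of `x` has depth (number of moves) at most `d`. -/
inductive DepthLe : GV → ℕ → Prop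
  | leaf (a d) : DepthLe (leaf a) d
  | node {l : List GV} {d} : (∀ x ∈ l, DepthLe x d) → DepthLe (node l) (d + 1)

/-- The indifferent-selfish relation `≤₁` for player 1, with the extra axiom
`2 =₁ 3`: player 1 does not distinguish which opponent wins. -/
inductive leI : GV → GV → Prop
  | refl (x) : leI x x
  | indiff23 : leI (leaf 2) (leaf 3)
  | indiff32 : leI (leaf 3) (leaf 2)
  | winTop {x} : ¬ IsWin 1 x → ¬ IsLoss 1 x → leI x (leaf 1)
  | lossBot {x y} : IsLoss 1 x → ¬ IsLoss 1 y → leI x y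
  | left {xs : List GV} {y} : (∀ x ∈ xs, leI x y) → leI (node xs) y
  | pair {xs ys : List GV} : (∀ x ∈ xs, ∀ y ∈ ys, leI x y) → leI (node xs) (node ys)

def eqI (x y : GV) : Prop := leI x y ∧ leI y x
def ltI (x y : GV) : Prop := leI x y ∧ ¬ eqI x y

/-- `n` nested singleton wraps around `x`. -/
def wrap : ℕ → GV → GV
  | 0, x => x
  | n+1, x => node [wrap n x]

/-! ### Three-player Clobber on a `1 × n` board.
A board is a list over `{0,1,2,3}`: `0` is an empty vertex, `i ≥ 1` a token of
player `i`.  A move clobbers an adjacent token of another player. -/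

/-- All boards resulting from a move of player `q` on board `b`. -/
def movesOf (b : List ℕ) (q : ℕ) : List (List ℕ) :=
  (List.range b.length).flatMap fun i =>
    (([i+1, i-1]).filter fun j =>
        decide (j < b.length) && decide (j ≠ i) && (b.getD i 0 == q) &&
        (b.getD j 0 != 0) && (b.getD j 0 != q)).map
      fun j => (b.set j q).set i 0

def canMove (b : List ℕ) (q : ℕ) : Bool := !(movesOf b q).isEmpty

/-- The first player, starting cyclically from `p`, who has a legal move
(players unable to move skip their turn). -/
def firstMover (b : List ℕ) (p : ℕ) : Option ℕ :=
  if canMove b p then some p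
  else if canMove b (nextP p) then some (nextP p)
  else if canMove b (nextP (nextP p)) then some (nextP (nextP p))
  else none

/-- A node all of whose (distinct) children are the single leaf `a` has value `a`. -/
def mkNode : List GV → GV
  | [leaf a] => leaf a
  | l => node l

/-- Bottom-up value of a Clobber position: `last` is the last player who moved;
if nobody can move the value is the leaf `last`, otherwise it is the list of
the distinct values of the moves of the next player able to move. -/
def clobberVal : ℕ → List ℕ → ℕ → ℕ → GV
  | 0, _, _, last => leaf last
  | fuel+1, b, p, last =>
    match firstMover b p with
    | none => leaf last
    | some q => mkNode (((movesOf b q).map fun b' => clobberVal fuel b' (nextP q) q).eraseDups)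

/-- The value of a Clobber board, player 1 moving first. -/
def clobber (b : List ℕ) : GV := clobberVal (b.length + 1) b 1 0

/-- Number of tokens on a board. -/
def tokens (b : List ℕ) : ℕ := (b.filter fun t => t ≠ 0).length

end GV
namespace GV

lemma isLoss_leaf_iff {p a : ℕ} : IsLoss p (leaf a) ↔ a ≠ p :=
  ⟨by rintro ⟨h⟩; assumption, IsLoss.leaf⟩

lemma isLoss_node_iff {p : ℕ} {l : List GV} : IsLoss p (node l) ↔ ∀ x ∈ l, IsLoss p x :=
  ⟨by rintro ⟨h⟩; assumption, IsLoss.node⟩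

lemma simple1_succ (i : ℕ) : simple 1 (i+1) = node [simple 2 i, simple 3 i] := by simp [simple]
lemma simple2_succ (i : ℕ) : simple 2 (i+1) = node [simple 1 i, simple 3 i] := by simp [simple]
lemma simple3_succ (i : ℕ) : simple 3 (i+1) = node [simple 1 i, simple 2 i] := by simp [simple]

lemma isLoss_simple : ∀ i a, (a = 1 ∨ a = 2 ∨ a = 3) →
    (IsLoss 1 (simple a i) ↔ ((i = 0 ∧ a ≠ 1) ∨ (i = 1 ∧ a = 1))) := by
  intro i
  induction i with
  | zero =>
    intro a _
    show IsLoss 1 (leaf a) ↔ _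
    rw [isLoss_leaf_iff]; omega
  | succ i ih =>
    rintro a (rfl | rfl | rfl)
    · rw [simple1_succ, isLoss_node_iff]
      simp only [List.forall_mem_cons, List.not_mem_nil, false_implies, implies_true, and_true]
      rw [ih 2 (by omega), ih 3 (by omega)]; omega
    · rw [simple2_succ, isLoss_node_iff]
      simp only [List.forall_mem_cons, List.not_mem_nil, false_implies, implies_true, and_true]
      rw [ih 1 (by omega), ih 3 (by omega)]; omega
    · rw [simple3_succ, isLoss_node_iff]
      simp only [List.forall_mem_cons, List.not_mem_nil, false_implies, implies_true, and_true]
      rw [ih 1 (by omega), ih 2 (by omega)]; omega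

lemma simple_inj : ∀ i j a b, (a = 1 ∨ a = 2 ∨ a = 3) → (b = 1 ∨ b = 2 ∨ b = 3) →
    simple a i = simple b j → a = b ∧ i = j := by
  intro i
  induction i with
  | zero =>
    intro j a b _ hb h
    cases j with
    | zero => cases h; exact ⟨rfl, rfl⟩
    | succ j =>
      exfalso
      rcases hb with rfl | rfl | rfl <;>
        simp [simple1_succ, simple2_succ, simple3_succ] at h <;>
        exact absurd h (by exact fun hh => GV.noConfusion hh)
  | succ i ih =>
    intro j a b ha hb h
    cases j with
    | zero =>
      exfalso
      rcases ha with rfl | rfl | rfl <;>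
        simp [simple1_succ, simple2_succ, simple3_succ] at h <;>
        exact absurd h (by exact fun hh => GV.noConfusion hh)
    | succ j =>
      rcases ha with rfl | rfl | rfl
      · rcases hb with rfl | rfl | rfl
        · simp only [simple1_succ, node.injEq, List.cons.injEq, and_true] at h
          have := ih j 2 2 (by omega) (by omega) h.1; omega
        · simp only [simple1_succ, simple2_succ, node.injEq, List.cons.injEq, and_true] at h
          have := ih j 2 1 (by omega) (by omega) h.1; omega
        · simp only [simple1_succ, simple3_succ, node.injEq, List.cons.injEq, and_true] at h
          have := ih j 2 1 (by omega) (by omega) h.1; omega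
      · rcases hb with rfl | rfl | rfl
        · simp only [simple1_succ, simple2_succ, node.injEq, List.cons.injEq, and_true] at h
          have := ih j 1 2 (by omega) (by omega) h.1; omega
        · simp only [simple2_succ, node.injEq, List.cons.injEq, and_true] at h
          have := ih j 1 1 (by omega) (by omega) h.1; omega
        · simp only [simple2_succ, simple3_succ, node.injEq, List.cons.injEq, and_true] at h
          have := ih j 3 2 (by omega) (by omega) h.2; omega
      · rcases hb with rfl | rfl | rfl
        · simp only [simple1_succ, simple3_succ, node.injEq, List.cons.injEq, and_true] at h
          have := ih j 1 2 (by omega) (by omega) h.1; omega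
        · simp only [simple2_succ, simple3_succ, node.injEq, List.cons.injEq, and_true] at h
          have := ih j 2 3 (by omega) (by omega) h.2; omega
        · simp only [simple3_succ, node.injEq, List.cons.injEq, and_true] at h
          have := ih j 1 1 (by omega) (by omega) h.1; omega

lemma simple_eq_leaf_one : ∀ j b, (b = 1 ∨ b = 2 ∨ b = 3) →
    simple b j = leaf 1 → b = 1 ∧ j = 0 := by
  intro j b hb h
  have := simple_inj j 0 b 1 hb (by omega) h
  omega

end GV
namespace GV
lemma simple_succ_children : ∀ a, (a = 1 ∨ a = 2 ∨ a = 3) → ∀ i, ∃ c d,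
    ((a = 1 ∧ c = 2 ∧ d = 3) ∨ (a = 2 ∧ c = 1 ∧ d = 3) ∨ (a = 3 ∧ c = 1 ∧ d = 2)) ∧
    simple a (i+1) = node [simple c i, simple d i] := by
  rintro a (rfl | rfl | rfl) i
  · exact ⟨2, 3, by omega, simple1_succ i⟩
  · exact ⟨1, 3, by omega, simple2_succ i⟩
  · exact ⟨1, 2, by omega, simple3_succ i⟩
lemma simple_zero (a : ℕ) : simple a 0 = leaf a := rfl
end GV
namespace GV
set_option maxHeartbeats 1000000 in
lemma le_simple : ∀ {x y : GV}, le 1 x y → ∀ a i b j,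
    (a = 1 ∨ a = 2 ∨ a = 3) → (b = 1 ∨ b = 2 ∨ b = 3) →
    x = simple a i → y = simple b j →
    ((a = b ∧ i = j) ∨
     (((i = 0 ∧ a ≠ 1) ∨ (i = 1 ∧ a = 1)) ∧ ¬((j = 0 ∧ b ≠ 1) ∨ (j = 1 ∧ b = 1))) ∨
     (b = 1 ∧ j = 0) ∨
     (i = 2 ∧ j = 1 ∧ a ≠ 1 ∧ b ≠ 1 ∧ a ≠ b)) := by
  intro x y h
  induction h with
  | refl x =>
    intro a i b j ha hb hx hy
    have := simple_inj i j a b ha hb (hx ▸ hy ▸ rfl)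
    omega
  | @winTop x hw hl =>
    intro a i b j ha hb hx hy
    have := simple_eq_leaf_one j b hb hy.symm
    omega
  | @lossBot x y hx hny =>
    intro a i b j ha hb hxe hye
    subst hxe; subst hye
    rw [isLoss_simple i a ha] at hx
    rw [isLoss_simple j b hb] at hny
    omega
  | @left xs y h ih =>
    intro a i b j ha hb hx hy
    cases i with
    | zero => rw [simple_zero] at hx; exact absurd hx (by simp)
    | succ i =>
      obtain ⟨c, d, hrel, heq⟩ := simple_succ_children a ha i
      rw [heq] at hx
      injection hx with hx
      subst hx
      have h1 := ih (simple c i) (by simp) c i b j (by omega) hb rfl hy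
      have h2 := ih (simple d i) (by simp) d i b j (by omega) hb rfl hy
      clear ih h hy
      rcases hrel with ⟨rfl,rfl,rfl⟩|⟨rfl,rfl,rfl⟩|⟨rfl,rfl,rfl⟩ <;>
        rcases hb with rfl|rfl|rfl <;> omega
  | @pair xs ys h ih =>
    intro a i b j ha hb hx hy
    cases i with
    | zero => rw [simple_zero] at hx; exact absurd hx (by simp)
    | succ i =>
      cases j with
      | zero => rw [simple_zero] at hy; exact absurd hy (by simp)
      | succ j =>
        obtain ⟨c, d, hrel, heq⟩ := simple_succ_children a ha i
        obtain ⟨e, f, hrel', heq'⟩ := simple_succ_children b hb j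
        rw [heq] at hx; rw [heq'] at hy
        injection hx with hx; injection hy with hy
        subst hx; subst hy
        have h1 := ih (simple c i) (by simp) (simple e j) (by simp) c i e j
          (by omega) (by omega) rfl rfl
        have h2 := ih (simple c i) (by simp) (simple f j) (by simp) c i f j
          (by omega) (by omega) rfl rfl
        have h3 := ih (simple d i) (by simp) (simple e j) (by simp) d i e j
          (by omega) (by omega) rfl rfl
        have h4 := ih (simple d i) (by simp) (simple f j) (by simp) d i f j
          (by omega) (by omega) rfl rfl
        clear ih h
        rcases hrel with ⟨rfl,rfl,rfl⟩|⟨rfl,rfl,rfl⟩|⟨rfl,rfl,rfl⟩ <;>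
          rcases hrel' with ⟨rfl,rfl,rfl⟩|⟨rfl,rfl,rfl⟩|⟨rfl,rfl,rfl⟩ <;> omega
end GV

namespace GV
lemma not_le_simple (a i b j : ℕ) (ha : a = 1 ∨ a = 2 ∨ a = 3) (hb : b = 1 ∨ b = 2 ∨ b = 3)
    (h : ¬ ((a = b ∧ i = j) ∨
     (((i = 0 ∧ a ≠ 1) ∨ (i = 1 ∧ a = 1)) ∧ ¬((j = 0 ∧ b ≠ 1) ∨ (j = 1 ∧ b = 1))) ∨
     (b = 1 ∧ j = 0) ∨
     (i = 2 ∧ j = 1 ∧ a ≠ 1 ∧ b ≠ 1 ∧ a ≠ b))) :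
    ¬ le 1 (simple a i) (simple b j) :=
  fun hle => h (le_simple hle a i b j ha hb rfl rfl)
end GV
namespace GV

lemma sizeOf_pos (x : GV) : 1 ≤ sizeOf x := by cases x <;> simp

lemma pLtF_leaf_left (p n a : ℕ) (y : GV) : pLtF p n (leaf a) y = lt p (leaf a) y := by
  cases n <;> cases y <;> rfl

lemma pLtF_leaf_right (p n a : ℕ) (x : GV) : pLtF p n x (leaf a) = lt p x (leaf a) := by
  cases n <;> cases x <;> rfl

lemma pLtF_succ_node (p n : ℕ) (xs ys : List GV) : pLtF p (n+1) (node xs) (node ys) =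
    (lt p (node xs) (node ys) ∨
      ((∀ a ∈ xs, ∀ b ∈ ys, pLtF p n a b ∨ (¬ pLtF p n a b ∧ ¬ pLtF p n b a)) ∧
        ∃ a ∈ xs, ∃ b ∈ ys, pLtF p n a b)) := rfl

lemma clause_congr {P Q : GV → GV → Prop} {xs ys : List GV}
    (h : ∀ a ∈ xs, ∀ b ∈ ys, (P a b ↔ Q a b) ∧ (P b a ↔ Q b a)) :
    (((∀ a ∈ xs, ∀ b ∈ ys, P a b ∨ (¬ P a b ∧ ¬ P b a)) ∧ ∃ a ∈ xs, ∃ b ∈ ys, P a b) ↔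
     ((∀ a ∈ xs, ∀ b ∈ ys, Q a b ∨ (¬ Q a b ∧ ¬ Q b a)) ∧ ∃ a ∈ xs, ∃ b ∈ ys, Q a b)) := by
  constructor
  · rintro ⟨h1, a, ha, b, hb, h2⟩
    refine ⟨fun a ha b hb => ?_, a, ha, b, hb, ((h a ha b hb).1).mp h2⟩
    rcases h1 a ha b hb with h3 | ⟨h3, h4⟩
    · exact Or.inl (((h a ha b hb).1).mp h3)
    · exact Or.inr ⟨fun hq => h3 (((h a ha b hb).1).mpr hq),
        fun hq => h4 (((h a ha b hb).2).mpr hq)⟩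
  · rintro ⟨h1, a, ha, b, hb, h2⟩
    refine ⟨fun a ha b hb => ?_, a, ha, b, hb, ((h a ha b hb).1).mpr h2⟩
    rcases h1 a ha b hb with h3 | ⟨h3, h4⟩
    · exact Or.inl (((h a ha b hb).1).mpr h3)
    · exact Or.inr ⟨fun hq => h3 (((h a ha b hb).1).mp hq),
        fun hq => h4 (((h a ha b hb).2).mp hq)⟩

lemma pLtF_stable (p : ℕ) : ∀ n x y, sizeOf x + sizeOf y ≤ n → (pLtF p n x y ↔ pLt p x y) := by
  intro n
  induction n using Nat.strong_induction_on with
  | _ n IH =>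
    intro x y hn
    cases x with
    | leaf a => rw [pLtF_leaf_left, pLt, pLtF_leaf_left]
    | node xs =>
      cases y with
      | leaf b => rw [pLtF_leaf_right, pLt, pLtF_leaf_right]
      | node ys =>
        have hx1 : 1 ≤ sizeOf (node xs) := sizeOf_pos _
        have hy1 : 1 ≤ sizeOf (node ys) := sizeOf_pos _
        obtain ⟨m, rfl⟩ : ∃ m, n = m + 1 := ⟨n - 1, by omega⟩
        obtain ⟨k, hk⟩ : ∃ k, sizeOf (node xs) + sizeOf (node ys) = k + 1 :=
          ⟨sizeOf (node xs) + sizeOf (node ys) - 1, by omega⟩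
        rw [pLt, hk, pLtF_succ_node, pLtF_succ_node]
        refine or_congr Iff.rfl (clause_congr fun a ha b hb => ?_)
        have hsa : sizeOf a < sizeOf xs := List.sizeOf_lt_of_mem ha
        have hsb : sizeOf b < sizeOf ys := List.sizeOf_lt_of_mem hb
        have hxs : sizeOf (node xs) = 1 + sizeOf xs := by simp
        have hys : sizeOf (node ys) = 1 + sizeOf ys := by simp
        have b1 : sizeOf a + sizeOf b ≤ m := by omega
        have b2 : sizeOf a + sizeOf b ≤ k := by omega
        have b3 : sizeOf b + sizeOf a ≤ m := by omega
        have b4 : sizeOf b + sizeOf a ≤ k := by omega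
        exact ⟨(IH m (by omega) a b b1).trans (IH k (by omega) a b b2).symm,
               (IH m (by omega) b a b3).trans (IH k (by omega) b a b4).symm⟩

lemma pLt_leaf_left (p a : ℕ) (y : GV) : pLt p (leaf a) y = lt p (leaf a) y := by
  rw [pLt, pLtF_leaf_left]

lemma pLt_leaf_right (p a : ℕ) (x : GV) : pLt p x (leaf a) = lt p x (leaf a) := by
  rw [pLt, pLtF_leaf_right]

lemma pLt_node_iff (p : ℕ) (xs ys : List GV) : pLt p (node xs) (node ys) ↔
    (lt p (node xs) (node ys) ∨
      ((∀ a ∈ xs, ∀ b ∈ ys, pLt p a b ∨ (¬ pLt p a b ∧ ¬ pLt p b a)) ∧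
        ∃ a ∈ xs, ∃ b ∈ ys, pLt p a b)) := by
  have hx1 : 1 ≤ sizeOf (node xs) := sizeOf_pos _
  have hy1 : 1 ≤ sizeOf (node ys) := sizeOf_pos _
  obtain ⟨k, hk⟩ : ∃ k, sizeOf (node xs) + sizeOf (node ys) = k + 1 :=
    ⟨sizeOf (node xs) + sizeOf (node ys) - 1, by omega⟩
  rw [pLt, hk, pLtF_succ_node]
  refine or_congr Iff.rfl (clause_congr fun a ha b hb => ?_)
  have hsa : sizeOf a < sizeOf xs := List.sizeOf_lt_of_mem ha
  have hsb : sizeOf b < sizeOf ys := List.sizeOf_lt_of_mem hb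
  have hxs : sizeOf (node xs) = 1 + sizeOf xs := by simp
  have hys : sizeOf (node ys) = 1 + sizeOf ys := by simp
  exact ⟨pLtF_stable p k a b (by omega), pLtF_stable p k b a (by omega)⟩

lemma pLt_pair_iff (p : ℕ) (x1 x2 y1 y2 : GV) :
    pLt p (node [x1, x2]) (node [y1, y2]) ↔
    (lt p (node [x1, x2]) (node [y1, y2]) ∨
      (((pLt p x1 y1 ∨ (¬ pLt p x1 y1 ∧ ¬ pLt p y1 x1)) ∧
        (pLt p x1 y2 ∨ (¬ pLt p x1 y2 ∧ ¬ pLt p y2 x1)) ∧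
        (pLt p x2 y1 ∨ (¬ pLt p x2 y1 ∧ ¬ pLt p y1 x2)) ∧
        (pLt p x2 y2 ∨ (¬ pLt p x2 y2 ∧ ¬ pLt p y2 x2))) ∧
       (pLt p x1 y1 ∨ pLt p x1 y2 ∨ pLt p x2 y1 ∨ pLt p x2 y2))) := by
  rw [pLt_node_iff]
  refine or_congr Iff.rfl (and_congr ?_ ?_)
  · constructor
    · intro h
      exact ⟨h x1 (by simp) y1 (by simp), h x1 (by simp) y2 (by simp),
             h x2 (by simp) y1 (by simp), h x2 (by simp) y2 (by simp)⟩
    · rintro ⟨h1, h2, h3, h4⟩ a ha b hb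
      rcases (by simpa using ha : a = x1 ∨ a = x2) with rfl | rfl <;>
        rcases (by simpa using hb : b = y1 ∨ b = y2) with rfl | rfl <;> assumption
  · constructor
    · rintro ⟨a, ha, b, hb, h⟩
      rcases (by simpa using ha : a = x1 ∨ a = x2) with rfl | rfl <;>
        rcases (by simpa using hb : b = y1 ∨ b = y2) with rfl | rfl <;> tauto
    · rintro (h | h | h | h)
      · exact ⟨x1, by simp, y1, by simp, h⟩
      · exact ⟨x1, by simp, y2, by simp, h⟩
      · exact ⟨x2, by simp, y1, by simp, h⟩
      · exact ⟨x2, by simp, y2, by simp, h⟩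

lemma lt_irrefl' (p : ℕ) (x : GV) : ¬ lt p x x := fun h => h.2 ⟨le.refl x, le.refl x⟩

lemma not_lt_of_not_le {p : ℕ} {x y : GV} (h : ¬ le p x y) : ¬ lt p x y := fun h' => h h'.1

end GV
namespace GV

lemma not_lt_simple (a i b j : ℕ) (ha : a = 1 ∨ a = 2 ∨ a = 3) (hb : b = 1 ∨ b = 2 ∨ b = 3)
    (h : ¬ ((a = b ∧ i = j) ∨
     (((i = 0 ∧ a ≠ 1) ∨ (i = 1 ∧ a = 1)) ∧ ¬((j = 0 ∧ b ≠ 1) ∨ (j = 1 ∧ b = 1))) ∨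
     (b = 1 ∧ j = 0) ∨
     (i = 2 ∧ j = 1 ∧ a ≠ 1 ∧ b ≠ 1 ∧ a ≠ b))) :
    ¬ lt 1 (simple a i) (simple b j) :=
  not_lt_of_not_le (not_le_simple a i b j ha hb h)

lemma lt_leaf_one (b : ℕ) (hb : b = 2 ∨ b = 3) : lt 1 (leaf b) (leaf 1) := by
  constructor
  · exact le.lossBot (isLoss_leaf_iff.mpr (by omega)) (fun h => by
      rw [isLoss_leaf_iff] at h; omega)
  · rintro ⟨-, h⟩
    have := le_simple h 1 0 b 0 (by omega) (by omega) rfl rfl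
    omega

lemma main_invariant : ∀ i : ℕ,
    (¬ pLt 1 (simple 2 i) (simple 3 i)) ∧ (¬ pLt 1 (simple 3 i) (simple 2 i)) ∧
    (¬ pLt 1 (simple 1 i) (simple 1 i)) ∧ (¬ pLt 1 (simple 2 i) (simple 2 i)) ∧
    (¬ pLt 1 (simple 3 i) (simple 3 i)) ∧
    (i % 2 = 0 → pLt 1 (simple 2 i) (simple 1 i) ∧ pLt 1 (simple 3 i) (simple 1 i) ∧
        ¬ pLt 1 (simple 1 i) (simple 2 i) ∧ ¬ pLt 1 (simple 1 i) (simple 3 i)) ∧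
    (i % 2 = 1 → pLt 1 (simple 1 i) (simple 2 i) ∧ pLt 1 (simple 1 i) (simple 3 i) ∧
        ¬ pLt 1 (simple 2 i) (simple 1 i) ∧ ¬ pLt 1 (simple 3 i) (simple 1 i)) := by
  intro i
  induction i with
  | zero =>
    rw [simple_zero, simple_zero, simple_zero]
    rw [pLt_leaf_left, pLt_leaf_left, pLt_leaf_left, pLt_leaf_left, pLt_leaf_left,
        pLt_leaf_left, pLt_leaf_left, pLt_leaf_left, pLt_leaf_left]
    refine ⟨not_lt_simple 2 0 3 0 (by omega) (by omega) (by omega),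
            not_lt_simple 3 0 2 0 (by omega) (by omega) (by omega),
            lt_irrefl' 1 _, lt_irrefl' 1 _, lt_irrefl' 1 _,
            fun _ => ⟨lt_leaf_one 2 (by omega), lt_leaf_one 3 (by omega),
              not_lt_simple 1 0 2 0 (by omega) (by omega) (by omega),
              not_lt_simple 1 0 3 0 (by omega) (by omega) (by omega)⟩,
            fun h => by omega⟩
  | succ i IH =>
    obtain ⟨N23, N32, N11, N22, N33, HE, HO⟩ := IH
    rcases Nat.even_or_odd i with he | ho
    · -- i even
      have hi : i % 2 = 0 := Nat.even_iff.mp he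
      obtain ⟨P21, P31, N12, N13⟩ := HE hi
      refine ⟨?_, ?_, ?_, ?_, ?_, fun h => by omega, fun _ => ⟨?_, ?_, ?_, ?_⟩⟩
      · -- ¬ pLt 2' 3'
        rw [simple2_succ, simple3_succ, pLt_pair_iff]
        rintro (hlt | ⟨⟨-, K12, -, -⟩, -⟩)
        · exact not_lt_simple 2 (i+1) 3 (i+1) (by omega) (by omega) (by omega)
            (by rw [simple2_succ, simple3_succ]; exact hlt)
        · rcases K12 with h | ⟨-, h⟩
          · exact N12 h
          · exact h P21
      · -- ¬ pLt 3' 2'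
        rw [simple3_succ, simple2_succ, pLt_pair_iff]
        rintro (hlt | ⟨⟨-, K13, -, -⟩, -⟩)
        · exact not_lt_simple 3 (i+1) 2 (i+1) (by omega) (by omega) (by omega)
            (by rw [simple2_succ, simple3_succ]; exact hlt)
        · rcases K13 with h | ⟨-, h⟩
          · exact N13 h
          · exact h P31
      · -- ¬ pLt 1' 1'
        rw [simple1_succ, pLt_pair_iff]
        rintro (hlt | ⟨-, (h | h | h | h)⟩)
        · exact lt_irrefl' 1 _ hlt
        · exact N22 h
        · exact N23 h
        · exact N32 h
        · exact N33 h
      · -- ¬ pLt 2' 2'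
        rw [simple2_succ, pLt_pair_iff]
        rintro (hlt | ⟨⟨-, K13, -, -⟩, -⟩)
        · exact lt_irrefl' 1 _ hlt
        · rcases K13 with h | ⟨-, h⟩
          · exact N13 h
          · exact h P31
      · -- ¬ pLt 3' 3'
        rw [simple3_succ, pLt_pair_iff]
        rintro (hlt | ⟨⟨-, K12, -, -⟩, -⟩)
        · exact lt_irrefl' 1 _ hlt
        · rcases K12 with h | ⟨-, h⟩
          · exact N12 h
          · exact h P21
      · -- pLt 1' 2'   (i+1 odd)
        rw [simple1_succ, simple2_succ, pLt_pair_iff]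
        exact Or.inr ⟨⟨Or.inl P21, Or.inr ⟨N23, N32⟩, Or.inl P31, Or.inr ⟨N33, N33⟩⟩,
          Or.inl P21⟩
      · -- pLt 1' 3'
        rw [simple1_succ, simple3_succ, pLt_pair_iff]
        exact Or.inr ⟨⟨Or.inl P21, Or.inr ⟨N22, N22⟩, Or.inl P31, Or.inr ⟨N32, N23⟩⟩,
          Or.inl P21⟩
      · -- ¬ pLt 2' 1'
        rw [simple2_succ, simple1_succ, pLt_pair_iff]
        rintro (hlt | ⟨⟨K12, -, -, -⟩, -⟩)
        · exact not_lt_simple 2 (i+1) 1 (i+1) (by omega) (by omega) (by omega)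
            (by rw [simple2_succ, simple1_succ]; exact hlt)
        · rcases K12 with h | ⟨-, h⟩
          · exact N12 h
          · exact h P21
      · -- ¬ pLt 3' 1'
        rw [simple3_succ, simple1_succ, pLt_pair_iff]
        rintro (hlt | ⟨⟨-, K13, -, -⟩, -⟩)
        · exact not_lt_simple 3 (i+1) 1 (i+1) (by omega) (by omega) (by omega)
            (by rw [simple3_succ, simple1_succ]; exact hlt)
        · rcases K13 with h | ⟨-, h⟩
          · exact N13 h
          · exact h P31
    · -- i odd
      have hi : i % 2 = 1 := Nat.odd_iff.mp ho
      obtain ⟨P12, P13, N21, N31⟩ := HO hi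
      refine ⟨?_, ?_, ?_, ?_, ?_, fun _ => ⟨?_, ?_, ?_, ?_⟩, fun h => by omega⟩
      · -- ¬ pLt 2' 3'  via K(3_i,1_i)
        rw [simple2_succ, simple3_succ, pLt_pair_iff]
        rintro (hlt | ⟨⟨-, -, K31, -⟩, -⟩)
        · exact not_lt_simple 2 (i+1) 3 (i+1) (by omega) (by omega) (by omega)
            (by rw [simple2_succ, simple3_succ]; exact hlt)
        · rcases K31 with h | ⟨-, h⟩
          · exact N31 h
          · exact h P13
      · -- ¬ pLt 3' 2'  via K(2_i,1_i)
        rw [simple3_succ, simple2_succ, pLt_pair_iff]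
        rintro (hlt | ⟨⟨-, -, K21, -⟩, -⟩)
        · exact not_lt_simple 3 (i+1) 2 (i+1) (by omega) (by omega) (by omega)
            (by rw [simple2_succ, simple3_succ]; exact hlt)
        · rcases K21 with h | ⟨-, h⟩
          · exact N21 h
          · exact h P12
      · -- ¬ pLt 1' 1'
        rw [simple1_succ, pLt_pair_iff]
        rintro (hlt | ⟨-, (h | h | h | h)⟩)
        · exact lt_irrefl' 1 _ hlt
        · exact N22 h
        · exact N23 h
        · exact N32 h
        · exact N33 h
      · -- ¬ pLt 2' 2'  x=y=[1_i,3_i], via K(3_i,1_i)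
        rw [simple2_succ, pLt_pair_iff]
        rintro (hlt | ⟨⟨-, -, K31, -⟩, -⟩)
        · exact lt_irrefl' 1 _ hlt
        · rcases K31 with h | ⟨-, h⟩
          · exact N31 h
          · exact h P13
      · -- ¬ pLt 3' 3'  x=y=[1_i,2_i], via K(2_i,1_i)
        rw [simple3_succ, pLt_pair_iff]
        rintro (hlt | ⟨⟨-, -, K21, -⟩, -⟩)
        · exact lt_irrefl' 1 _ hlt
        · rcases K21 with h | ⟨-, h⟩
          · exact N21 h
          · exact h P12
      · -- pLt 2' 1'   (i+1 even) x=[1,3], y=[2,3]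
        rw [simple2_succ, simple1_succ, pLt_pair_iff]
        exact Or.inr ⟨⟨Or.inl P12, Or.inl P13, Or.inr ⟨N32, N23⟩, Or.inr ⟨N33, N33⟩⟩,
          Or.inl P12⟩
      · -- pLt 3' 1'  x=[1,2], y=[2,3]
        rw [simple3_succ, simple1_succ, pLt_pair_iff]
        exact Or.inr ⟨⟨Or.inl P12, Or.inl P13, Or.inr ⟨N22, N22⟩, Or.inr ⟨N23, N32⟩⟩,
          Or.inl P12⟩
      · -- ¬ pLt 1' 2'  x=[2,3], y=[1,3]: via K(2_i,1_i) = first component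
        rw [simple1_succ, simple2_succ, pLt_pair_iff]
        rintro (hlt | ⟨⟨K21, -, -, -⟩, -⟩)
        · exact not_lt_simple 1 (i+1) 2 (i+1) (by omega) (by omega) (by omega)
            (by rw [simple1_succ, simple2_succ]; exact hlt)
        · rcases K21 with h | ⟨-, h⟩
          · exact N21 h
          · exact h P12
      · -- ¬ pLt 1' 3'  x=[2,3], y=[1,2]: via K(3_i,1_i) = third component
        rw [simple1_succ, simple3_succ, pLt_pair_iff]
        rintro (hlt | ⟨⟨-, -, K31, -⟩, -⟩)
        · exact not_lt_simple 1 (i+1) 3 (i+1) (by omega) (by omega) (by omega)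
            (by rw [simple1_succ, simple3_succ]; exact hlt)
        · rcases K31 with h | ⟨-, h⟩
          · exact N31 h
          · exact h P13
end GV


/-- for every `i ≥ 0`, the simple values `2_i` and `3_i` are
prudently incomparable from player 1's perspective. -/
theorem two_i_three_i_prudently_incomparable :
    ∀ i : ℕ, GV.pIncomp 1 (GV.simple 2 i) (GV.simple 3 i) := by
  intro i
  exact ⟨(GV.main_invariant i).1, (GV.main_invariant i).2.1⟩
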